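/- arXiv:1710.09447 — 4 statements merged into one kernel-verified Lean document; each statement's English description precedes it below -/
import Mathlib

section
/- Let H be a symmetric d×d real matrix with ‖H‖₂ ≤ L₁, and let M = I - H/L₁. If a unit vector v satisfies vᵀMv ≥ (1-δ)(1-ε)·λ_max(M) with δ, ε ∈ (0,1), then λ_min(H) ≥ vᵀHv - 2L₁(δ+ε). -/
open scoped RealInnerProductSpace

noncomputable def lambdaMin {d : ℕ}
    (H : EuclideanSpace ℝ (Fin d) →L[ℝ] EuclideanSpace ℝ (Fin d)) : ℝ :=
  ⨅ v : {v : EuclideanSpace ℝ (Fin d) // ‖v‖ = 1}, ⟪H v.1, v.1⟫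

noncomputable def lambdaMax {d : ℕ}
    (H : EuclideanSpace ℝ (Fin d) →L[ℝ] EuclideanSpace ℝ (Fin d)) : ℝ :=
  ⨆ v : {v : EuclideanSpace ℝ (Fin d) // ‖v‖ = 1}, ⟪H v.1, v.1⟫

/-!
The affine map `x ↦ 1 - x / L₁` reverses order, so `λ_max(M) = 1 - λ_min(H) / L₁`, and the
hypothesis reads `1 - y ≥ (1 - δ)(1 - ε)(1 - x)` for the normalised Rayleigh quotients
`x = λ_min(H) / L₁ ≥ -1` and `y = vᵀHv / L₁`. Since `1 - (1 - δ)(1 - ε) ≤ δ + ε` and `1 - x ≤ 2`,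
this gives `y - x ≤ 2(δ + ε)`.
-/

section InnerProductSpace

variable {E : Type*} [NormedAddCommGroup E] [InnerProductSpace ℝ E]

lemma abs_inner_apply_self_le_opNorm (T : E →L[ℝ] E) {u : E} (hu : ‖u‖ = 1) :
    |⟪T u, u⟫| ≤ ‖T‖ :=
  calc |⟪T u, u⟫| ≤ ‖T u‖ * ‖u‖ := abs_real_inner_le_norm _ _
    _ ≤ ‖T‖ * ‖u‖ * ‖u‖ := by gcongr; exact T.le_opNorm u
    _ = ‖T‖ := by rw [hu, mul_one, mul_one]

lemma inner_id_sub_smul_apply_self (T : E →L[ℝ] E) (a : ℝ) {u : E} (hu : ‖u‖ = 1) :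
    ⟪(ContinuousLinearMap.id ℝ E - a • T) u, u⟫ = 1 - a * ⟪T u, u⟫ := by
  simp only [sub_apply, smul_apply, ContinuousLinearMap.id_apply, inner_sub_left,
    real_inner_smul_left, real_inner_self_eq_norm_sq, hu, one_pow]

end InnerProductSpace

section Rayleigh

variable {d : ℕ}

lemma bddBelow_range_inner_apply_self
    (T : EuclideanSpace ℝ (Fin d) →L[ℝ] EuclideanSpace ℝ (Fin d)) :
    BddBelow (Set.range fun u : {v : EuclideanSpace ℝ (Fin d) // ‖v‖ = 1} =>
      ⟪T u.1, u.1⟫) :=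
  ⟨-‖T‖, by
    rintro _ ⟨u, rfl⟩
    exact neg_le_of_abs_le (abs_inner_apply_self_le_opNorm T u.2)⟩

lemma bddAbove_range_inner_apply_self
    (T : EuclideanSpace ℝ (Fin d) →L[ℝ] EuclideanSpace ℝ (Fin d)) :
    BddAbove (Set.range fun u : {v : EuclideanSpace ℝ (Fin d) // ‖v‖ = 1} =>
      ⟪T u.1, u.1⟫) :=
  ⟨‖T‖, by
    rintro _ ⟨u, rfl⟩
    exact le_of_abs_le (abs_inner_apply_self_le_opNorm T u.2)⟩

lemma lambdaMin_le_inner_apply_self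
    (T : EuclideanSpace ℝ (Fin d) →L[ℝ] EuclideanSpace ℝ (Fin d))
    {u : EuclideanSpace ℝ (Fin d)} (hu : ‖u‖ = 1) : lambdaMin T ≤ ⟪T u, u⟫ :=
  ciInf_le (bddBelow_range_inner_apply_self T) ⟨u, hu⟩

lemma neg_opNorm_le_lambdaMin
    (T : EuclideanSpace ℝ (Fin d) →L[ℝ] EuclideanSpace ℝ (Fin d)) :
    -‖T‖ ≤ lambdaMin T := by
  cases isEmpty_or_nonempty {v : EuclideanSpace ℝ (Fin d) // ‖v‖ = 1}
  · rw [lambdaMin, Real.iInf_of_isEmpty, neg_nonpos]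
    exact norm_nonneg T
  · exact le_ciInf fun u => neg_le_of_abs_le (abs_inner_apply_self_le_opNorm T u.2)

lemma lambdaMax_id_sub_smul [Nonempty {v : EuclideanSpace ℝ (Fin d) // ‖v‖ = 1}]
    (T : EuclideanSpace ℝ (Fin d) →L[ℝ] EuclideanSpace ℝ (Fin d)) {a : ℝ} (ha : 0 ≤ a) :
    lambdaMax (ContinuousLinearMap.id ℝ _ - a • T) = 1 - a * lambdaMin T := by
  have hquot (u : {v : EuclideanSpace ℝ (Fin d) // ‖v‖ = 1}) :=
    inner_id_sub_smul_apply_self T a u.2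
  apply le_antisymm
  · refine ciSup_le fun u => ?_
    rw [hquot u]
    gcongr
    exact lambdaMin_le_inner_apply_self T u.2
  · rw [sub_le_comm, lambdaMin, Real.mul_iInf_of_nonneg ha]
    refine le_ciInf fun u => ?_
    rw [sub_le_comm, ← hquot u]
    exact le_ciSup (bddAbove_range_inner_apply_self _) u

end Rayleigh

lemma sub_le_of_mul_one_sub_inv_mul_le {L m q δ ε : ℝ} (hL : 0 < L) (hm : -L ≤ m)
    (hδ : δ ∈ Set.Icc (0 : ℝ) 1) (hε : ε ∈ Set.Icc (0 : ℝ) 1)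
    (h : (1 - δ) * (1 - ε) * (1 - L⁻¹ * m) ≤ 1 - L⁻¹ * q) :
    q - 2 * L * (δ + ε) ≤ m := by
  obtain ⟨hδ0, hδ1⟩ := hδ
  obtain ⟨hε0, hε1⟩ := hε
  have hscaled : (1 - δ) * (1 - ε) * (L - m) ≤ L - q := by
    have := mul_le_mul_of_nonneg_left h hL.le
    field_simp at this
    linarith
  nlinarith [mul_nonneg (mul_nonneg hδ0 hε0) hL.le,
    mul_nonneg (by nlinarith : 0 ≤ δ + ε - δ * ε) (by linarith : 0 ≤ L + m)]

theorem stmt_0_general {d : ℕ} (L₁ δ ε : ℝ) (hL₁ : 0 < L₁)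
    (hδ : δ ∈ Set.Ioo (0:ℝ) 1) (hε : ε ∈ Set.Ioo (0:ℝ) 1)
    (H : EuclideanSpace ℝ (Fin d) →L[ℝ] EuclideanSpace ℝ (Fin d))
    (hnorm : ‖H‖ ≤ L₁)
    (M : EuclideanSpace ℝ (Fin d) →L[ℝ] EuclideanSpace ℝ (Fin d))
    (hM : M = ContinuousLinearMap.id ℝ (EuclideanSpace ℝ (Fin d)) - L₁⁻¹ • H)
    (v : EuclideanSpace ℝ (Fin d)) (hv : ‖v‖ = 1)
    (hray : ⟪M v, v⟫ ≥ (1 - δ) * (1 - ε) * lambdaMax M) :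
    lambdaMin H ≥ ⟪H v, v⟫ - 2 * L₁ * (δ + ε) := by
  have : Nonempty {v : EuclideanSpace ℝ (Fin d) // ‖v‖ = 1} := ⟨⟨v, hv⟩⟩
  have hmin : -L₁ ≤ lambdaMin H := (neg_le_neg hnorm).trans (neg_opNorm_le_lambdaMin H)
  have hmax : lambdaMax M = 1 - L₁⁻¹ * lambdaMin H :=
    hM ▸ lambdaMax_id_sub_smul H (by positivity)
  rw [hM, inner_id_sub_smul_apply_self H _ hv, ← hM, hmax] at hray
  exact sub_le_of_mul_one_sub_inv_mul_le hL₁ hmin (Set.Ioo_subset_Icc_self hδ)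
    (Set.Ioo_subset_Icc_self hε) hray

theorem stmt_0 {d : ℕ} (L₁ δ ε : ℝ) (hL₁ : 0 < L₁)
    (hδ : δ ∈ Set.Ioo (0:ℝ) 1) (hε : ε ∈ Set.Ioo (0:ℝ) 1)
    (H : EuclideanSpace ℝ (Fin d) →L[ℝ] EuclideanSpace ℝ (Fin d))
    (hsym : IsSelfAdjoint H) (hnorm : ‖H‖ ≤ L₁)
    (M : EuclideanSpace ℝ (Fin d) →L[ℝ] EuclideanSpace ℝ (Fin d))
    (hM : M = ContinuousLinearMap.id ℝ (EuclideanSpace ℝ (Fin d)) - L₁⁻¹ • H)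
    (v : EuclideanSpace ℝ (Fin d)) (hv : ‖v‖ = 1)
    (hray : ⟪M v, v⟫ ≥ (1 - δ) * (1 - ε) * lambdaMax M) :
    lambdaMin H ≥ ⟪H v, v⟫ - 2 * L₁ * (δ + ε) :=
  stmt_0_general L₁ δ ε hL₁ hδ hε H hnorm M hM v hv hray
end

section
/- Suppose f : ℝ^d → ℝ is twice differentiable with L₂-Lipschitz Hessian, g ∈ ℝ^d satisfies ‖g - ∇f(x)‖ ≤ ε₄ with ε₄ ≤ ε₂²/(24L₂), H is a symmetric matrix with ‖H - ∇²f(x)‖₂ ≤ ε₂/24, and v is a unit vector. Let η = (ε₂/L₂)·sign(vᵀg) and x⁺ = x - η v. Then f(x⁺) - f(x) ≤ ε₂³/(24L₂²) + ε₂³/(48L₂²) + (ε₂²/(2L₂²))·vᵀHv + ε₂³/(6L₂²), i.e., f(x) - f(x⁺) ≥ -(ε₂²/(2L₂²))·vᵀHv - 11ε₂³/(48L₂²). -/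
open scoped RealInnerProductSpace

noncomputable def sgn (t : ℝ) : ℝ := if 0 ≤ t then 1 else -1

/-!
Along the segment `t ↦ x + t • u` the Hessian moves by at most `L₂ t ‖u‖`; integrating this twice
gives the cubic Taylor bound
`f (x + u) ≤ f x + ⟪∇f x, u⟫ + ½ ⟪∇²f x u, u⟫ + L₂ / 6 ‖u‖³`.
Take `u = -η v`. Since `η ⟪g, v⟫ = |η| |⟪g, v⟫| ≥ 0`, the first-order term `-η ⟪∇f x, v⟫` is at most
`|η| ‖g - ∇f x‖ ≤ ε₂³ / (24 L₂²)`; the second-order term is `η²/2 ⟪∇²f x v, v⟫`, which exceeds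
`η²/2 ⟪H v, v⟫` by at most `η²/2 · ε₂ / 24`; and the cubic term is `ε₂³ / (6 L₂²)`.
-/

lemma abs_sgn (t : ℝ) : |sgn t| = 1 := by
  unfold sgn; split <;> simp

lemma sgn_mul_self (t : ℝ) : sgn t * t = |t| := by
  unfold sgn
  split_ifs with ht
  · rw [one_mul, abs_of_nonneg ht]
  · rw [neg_one_mul, abs_of_neg (not_le.mp ht)]

section Taylor

variable {F : Type*} [NormedAddCommGroup F] [NormedSpace ℝ F]

lemma norm_image_one_le_of_norm_deriv_le_mul_pow {φ φ' : ℝ → F} {C : ℝ} (n : ℕ)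
    (hφ : ∀ t, HasDerivAt φ (φ' t) t) (hφ0 : φ 0 = 0)
    (bound : ∀ t ∈ Set.Ico (0 : ℝ) 1, ‖φ' t‖ ≤ C * t ^ n) :
    ‖φ 1‖ ≤ C / (n + 1) := by
  have hB : ∀ t : ℝ, HasDerivAt (fun s => C / (n + 1) * s ^ (n + 1)) (C * t ^ n) t := by
    intro t
    refine ((hasDerivAt_pow (n + 1) t).const_mul (C / (n + 1))).congr_deriv ?_
    rw [Nat.add_sub_cancel]
    push_cast
    field_simp
  simpa using image_norm_le_of_norm_deriv_right_le_deriv_boundary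
    (fun t _ => (hφ t).continuousAt.continuousWithinAt) (fun t _ => (hφ t).hasDerivWithinAt)
    (by simp [hφ0]) hB bound (Set.right_mem_Icc.2 zero_le_one)

variable {E : Type*} [NormedAddCommGroup E] [NormedSpace ℝ E]

theorem norm_image_add_sub_sub_fderiv_le {G : E → F} {L : ℝ} {x : E}
    (hG : Differentiable ℝ G)
    (hlip : ∀ y, ‖fderiv ℝ G y - fderiv ℝ G x‖ ≤ L * ‖y - x‖) (u : E) :
    ‖G (x + u) - G x - fderiv ℝ G x u‖ ≤ L / 2 * ‖u‖ ^ 2 := by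
  have hφ : ∀ t : ℝ, HasDerivAt (fun s : ℝ => G (x + s • u) - G x - s • fderiv ℝ G x u)
      (fderiv ℝ G (x + t • u) u - fderiv ℝ G x u) t := by
    intro t
    have hline : HasDerivAt (fun s : ℝ => x + s • u) u t := by
      simpa using ((hasDerivAt_id t).smul_const u).const_add x
    exact (((hG _).hasFDerivAt.comp_hasDerivAt t hline).sub_const (G x)).sub
      (by simpa using (hasDerivAt_id t).smul_const (fderiv ℝ G x u))
  have bound : ∀ t ∈ Set.Ico (0 : ℝ) 1,
      ‖fderiv ℝ G (x + t • u) u - fderiv ℝ G x u‖ ≤ L * ‖u‖ ^ 2 * t ^ 1 := by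
    intro t ht
    calc ‖fderiv ℝ G (x + t • u) u - fderiv ℝ G x u‖
        ≤ ‖fderiv ℝ G (x + t • u) - fderiv ℝ G x‖ * ‖u‖ :=
          (fderiv ℝ G (x + t • u) - fderiv ℝ G x).le_opNorm u
      _ ≤ L * ‖t • u‖ * ‖u‖ := by
          gcongr
          simpa using hlip (x + t • u)
      _ = L * ‖u‖ ^ 2 * t ^ 1 := by
          rw [norm_smul, Real.norm_of_nonneg ht.1]; ring
  have h1 := norm_image_one_le_of_norm_deriv_le_mul_pow 1 hφ (by simp) bound
  have h2 : L * ‖u‖ ^ 2 / ((1 : ℕ) + 1 : ℝ) = L / 2 * ‖u‖ ^ 2 := by push_cast; ring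
  rwa [one_smul, one_smul, h2] at h1

end Taylor

section Inner

variable {E : Type*} [NormedAddCommGroup E] [InnerProductSpace ℝ E]

lemma real_inner_apply_self_le_add_norm_sub (A B : E →L[ℝ] E) (v : E) :
    ⟪A v, v⟫ ≤ ⟪B v, v⟫ + ‖A - B‖ * ‖v‖ ^ 2 := by
  have h : ⟪(A - B) v, v⟫ ≤ ‖A - B‖ * ‖v‖ ^ 2 := calc
    ⟪(A - B) v, v⟫ ≤ ‖(A - B) v‖ * ‖v‖ := real_inner_le_norm _ _
    _ ≤ ‖A - B‖ * ‖v‖ * ‖v‖ := by gcongr; exact (A - B).le_opNorm v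
    _ = ‖A - B‖ * ‖v‖ ^ 2 := by ring
  rw [sub_apply, inner_sub_left] at h
  linarith

lemma neg_sgn_mul_inner_le (v g g' : E) : -(sgn ⟪v, g⟫ * ⟪g', v⟫) ≤ ‖g - g'‖ * ‖v‖ := by
  have hsplit : sgn ⟪v, g⟫ * ⟪g', v⟫ = |⟪v, g⟫| - sgn ⟪v, g⟫ * ⟪g - g', v⟫ := by
    rw [← sgn_mul_self, inner_sub_left, real_inner_comm v g]; ring
  have herr : |sgn ⟪v, g⟫ * ⟪g - g', v⟫| ≤ ‖g - g'‖ * ‖v‖ := by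
    rw [abs_mul, abs_sgn, one_mul]; exact abs_real_inner_le_norm _ _
  rw [hsplit]
  linarith [abs_nonneg ⟪v, g⟫, le_abs_self (sgn ⟪v, g⟫ * ⟪g - g', v⟫)]

variable [CompleteSpace E]

theorem image_add_le_of_lipschitz_hessian {f : E → ℝ} {L : ℝ} {x : E}
    (hf : Differentiable ℝ f) (hf' : Differentiable ℝ (gradient f))
    (hlip : ∀ y, ‖fderiv ℝ (gradient f) y - fderiv ℝ (gradient f) x‖ ≤ L * ‖y - x‖) (u : E) :
    f (x + u) ≤ f x + ⟪gradient f x, u⟫ + 1 / 2 * ⟪fderiv ℝ (gradient f) x u, u⟫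
      + L / 6 * ‖u‖ ^ 3 := by
  set H₀ := fderiv ℝ (gradient f) x
  have hφ : ∀ t : ℝ, HasDerivAt
      (fun s => f (x + s • u) - f x - s * ⟪gradient f x, u⟫ - s ^ 2 / 2 * ⟪H₀ u, u⟫)
      ⟪gradient f (x + t • u) - gradient f x - H₀ (t • u), u⟫ t := by
    intro t
    have hline : HasDerivAt (fun s : ℝ => x + s • u) u t := by
      simpa using ((hasDerivAt_id t).smul_const u).const_add x
    have hcomp := (hf (x + t • u)).hasFDerivAt.comp_hasDerivAt t hline
    rw [← toDual_gradient, InnerProductSpace.toDual_apply_apply] at hcomp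
    refine (((hcomp.sub_const (f x)).sub ((hasDerivAt_id t).mul_const _)).sub
      (((hasDerivAt_pow 2 t).div_const 2).mul_const _)).congr_deriv ?_
    rw [map_smul, inner_sub_left, inner_sub_left, real_inner_smul_left]
    simp
  have bound : ∀ t ∈ Set.Ico (0 : ℝ) 1,
      ‖⟪gradient f (x + t • u) - gradient f x - H₀ (t • u), u⟫‖ ≤ L / 2 * ‖u‖ ^ 3 * t ^ 2 := by
    intro t ht
    calc ‖⟪gradient f (x + t • u) - gradient f x - H₀ (t • u), u⟫‖
        ≤ ‖gradient f (x + t • u) - gradient f x - H₀ (t • u)‖ * ‖u‖ := norm_inner_le_norm _ _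
      _ ≤ L / 2 * ‖t • u‖ ^ 2 * ‖u‖ := by
          gcongr
          exact norm_image_add_sub_sub_fderiv_le hf' hlip (t • u)
      _ = L / 2 * ‖u‖ ^ 3 * t ^ 2 := by
          rw [norm_smul, Real.norm_of_nonneg ht.1]; ring
  have h1 := norm_image_one_le_of_norm_deriv_le_mul_pow 2 hφ (by simp) bound
  simp only [one_smul, one_mul, one_pow, Real.norm_eq_abs, abs_le] at h1
  have h2 : L / 2 * ‖u‖ ^ 3 / ((2 : ℕ) + 1 : ℝ) = L / 6 * ‖u‖ ^ 3 := by push_cast; ring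
  linarith [h1.2]

theorem image_sub_sgn_smul_le_of_lipschitz_hessian {f : E → ℝ} {L a : ℝ} {x g v : E}
    (hf : Differentiable ℝ f) (hf' : Differentiable ℝ (gradient f))
    (hlip : ∀ y, ‖fderiv ℝ (gradient f) y - fderiv ℝ (gradient f) x‖ ≤ L * ‖y - x‖)
    (ha : 0 ≤ a) (hv : ‖v‖ = 1) :
    f (x - (a * sgn ⟪v, g⟫) • v) - f x ≤ a * ‖g - gradient f x‖
      + a ^ 2 / 2 * ⟪fderiv ℝ (gradient f) x v, v⟫ + L / 6 * a ^ 3 := by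
  have htaylor := image_add_le_of_lipschitz_hessian hf hf' hlip (-(a * sgn ⟪v, g⟫) • v)
  simp only [neg_smul, ← sub_eq_add_neg, map_neg, inner_neg_left, inner_neg_right, map_smul,
    real_inner_smul_left, real_inner_smul_right, norm_neg, norm_smul, hv, Real.norm_eq_abs,
    abs_mul, abs_sgn, abs_of_nonneg ha, mul_one] at htaylor
  have hgrad := neg_sgn_mul_inner_le v g (gradient f x)
  rw [hv, mul_one] at hgrad
  have hsgn_sq : sgn ⟪v, g⟫ ^ 2 = 1 := by rw [← sq_abs, abs_sgn, one_pow]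
  linear_combination htaylor + a * hgrad + a ^ 2 / 2 * ⟪fderiv ℝ (gradient f) x v, v⟫ * hsgn_sq

end Inner

theorem stmt_3_general {d : ℕ} (L₂ ε₂ ε₄ : ℝ) (hL₂ : 0 < L₂) (hε₂ : 0 < ε₂)
    (f : EuclideanSpace ℝ (Fin d) → ℝ)
    (hf : Differentiable ℝ f) (hf' : Differentiable ℝ (gradient f))
    (hlip : ∀ x y, ‖fderiv ℝ (gradient f) x - fderiv ℝ (gradient f) y‖ ≤ L₂ * ‖x - y‖)
    (x g v : EuclideanSpace ℝ (Fin d)) (hv : ‖v‖ = 1)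
    (hg : ‖g - gradient f x‖ ≤ ε₄) (hε₄ : ε₄ ≤ ε₂ ^ 2 / (24 * L₂))
    (H : EuclideanSpace ℝ (Fin d) →L[ℝ] EuclideanSpace ℝ (Fin d))
    (hH : ‖H - fderiv ℝ (gradient f) x‖ ≤ ε₂ / 24)
    (η : ℝ) (hη : η = ε₂ / L₂ * sgn ⟪v, g⟫) :
    f (x - η • v) - f x ≤ ε₂ ^ 3 / (24 * L₂ ^ 2) + ε₂ ^ 3 / (48 * L₂ ^ 2)
      + ε₂ ^ 2 / (2 * L₂ ^ 2) * ⟪H v, v⟫ + ε₂ ^ 3 / (6 * L₂ ^ 2) ∧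
    f x - f (x - η • v) ≥
      -(ε₂ ^ 2 / (2 * L₂ ^ 2)) * ⟪H v, v⟫ - 11 * ε₂ ^ 3 / (48 * L₂ ^ 2) := by
  subst hη
  have hhess : ⟪fderiv ℝ (gradient f) x v, v⟫ ≤ ⟪H v, v⟫ + ε₂ / 24 := by
    have := real_inner_apply_self_le_add_norm_sub (fderiv ℝ (gradient f) x) H v
    rw [norm_sub_rev, hv] at this
    linarith
  have hdescent := calc
    f (x - (ε₂ / L₂ * sgn ⟪v, g⟫) • v) - f x
        ≤ ε₂ / L₂ * ‖g - gradient f x‖ + (ε₂ / L₂) ^ 2 / 2 * ⟪fderiv ℝ (gradient f) x v, v⟫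
          + L₂ / 6 * (ε₂ / L₂) ^ 3 :=
      image_sub_sgn_smul_le_of_lipschitz_hessian hf hf' (fun y => hlip y x) (by positivity) hv
    _ ≤ ε₂ / L₂ * (ε₂ ^ 2 / (24 * L₂)) + (ε₂ / L₂) ^ 2 / 2 * (⟪H v, v⟫ + ε₂ / 24)
          + L₂ / 6 * (ε₂ / L₂) ^ 3 := by
      gcongr
      exact hg.trans hε₄
    _ = ε₂ ^ 3 / (24 * L₂ ^ 2) + ε₂ ^ 3 / (48 * L₂ ^ 2)
          + ε₂ ^ 2 / (2 * L₂ ^ 2) * ⟪H v, v⟫ + ε₂ ^ 3 / (6 * L₂ ^ 2) := by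
      field_simp
      ring
  refine ⟨hdescent, ?_⟩
  have h11 : ε₂ ^ 3 / (24 * L₂ ^ 2) + ε₂ ^ 3 / (48 * L₂ ^ 2) + ε₂ ^ 3 / (6 * L₂ ^ 2)
      = 11 * ε₂ ^ 3 / (48 * L₂ ^ 2) := by ring
  linarith

theorem stmt_3 {d : ℕ} (L₂ ε₂ ε₄ : ℝ) (hL₂ : 0 < L₂) (hε₂ : 0 < ε₂)
    (f : EuclideanSpace ℝ (Fin d) → ℝ)
    (hf : Differentiable ℝ f) (hf' : Differentiable ℝ (gradient f))
    (hlip : ∀ x y, ‖fderiv ℝ (gradient f) x - fderiv ℝ (gradient f) y‖ ≤ L₂ * ‖x - y‖)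
    (x g v : EuclideanSpace ℝ (Fin d)) (hv : ‖v‖ = 1)
    (hg : ‖g - gradient f x‖ ≤ ε₄) (hε₄ : ε₄ ≤ ε₂ ^ 2 / (24 * L₂))
    (H : EuclideanSpace ℝ (Fin d) →L[ℝ] EuclideanSpace ℝ (Fin d))
    (hHsym : IsSelfAdjoint H) (hH : ‖H - fderiv ℝ (gradient f) x‖ ≤ ε₂ / 24)
    (η : ℝ) (hη : η = ε₂ / L₂ * sgn ⟪v, g⟫) :
    f (x - η • v) - f x ≤ ε₂ ^ 3 / (24 * L₂ ^ 2) + ε₂ ^ 3 / (48 * L₂ ^ 2)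
      + ε₂ ^ 2 / (2 * L₂ ^ 2) * ⟪H v, v⟫ + ε₂ ^ 3 / (6 * L₂ ^ 2) ∧
    f x - f (x - η • v) ≥
      -(ε₂ ^ 2 / (2 * L₂ ^ 2)) * ⟪H v, v⟫ - 11 * ε₂ ^ 3 / (48 * L₂ ^ 2) :=
  stmt_3_general L₂ ε₂ ε₄ hL₂ hε₂ f hf hf' hlip x g v hv hg hε₄ H hH η hη
end

section
/- Suppose f : ℝ^d → ℝ is differentiable with L₁-Lipschitz gradient and g ∈ ℝ^d satisfies ‖g - ∇f(x)‖ ≤ ε₄ with ε₄ ≤ ε₁/(2√2). Let x⁺ = x - g/L₁. Then f(x⁺) - f(x) ≤ -(1/(4L₁))‖g‖² + ε₁²/(8L₁). -/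
/-!
The descent lemma `f y ≤ f x + ⟪∇f x, y - x⟫ + L/2 ‖y - x‖²` holds because the Lipschitz bound
on the gradient makes `t ↦ f (x + t(y - x)) - t ⟪∇f x, y - x⟫ - L/2 t² ‖y - x‖²` antitone on
`t ≥ 0`. At `y = x - g/L` it gives
`f y - f x ≤ (⟪g - ∇f x, g⟫ - ‖g‖²/2)/L ≤ (ε₄‖g‖ - ‖g‖²/2)/L`,
and `ε₄‖g‖ ≤ ε₄² + ‖g‖²/4` together with `ε₄² ≤ ε₁²/8` finishes.
-/

open scoped RealInnerProductSpace Gradient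

section Descent

variable {E : Type*} [NormedAddCommGroup E] [NormedSpace ℝ E] {f : E → ℝ} {L : ℝ} {x : E}

theorem image_le_add_fderiv_add_sq_of_norm_fderiv_sub_le (hf : Differentiable ℝ f)
    (hL : ∀ z, ‖fderiv ℝ f z - fderiv ℝ f x‖ ≤ L * ‖z - x‖) (y : E) :
    f y ≤ f x + fderiv ℝ f x (y - x) + L / 2 * ‖y - x‖ ^ 2 := by
  set v := y - x
  set φ : ℝ → ℝ := fun t ↦
    f (x + t • v) - t * fderiv ℝ f x v - L / 2 * t ^ 2 * ‖v‖ ^ 2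
  have hφ' : ∀ t : ℝ, HasDerivAt φ
      (fderiv ℝ f (x + t • v) v - fderiv ℝ f x v - L * t * ‖v‖ ^ 2) t := by
    intro t
    have hline : HasDerivAt (fun t : ℝ ↦ x + t • v) v t := by
      simpa using ((hasDerivAt_id t).smul_const v).const_add x
    have hquad := ((hasDerivAt_pow 2 t).const_mul (L / 2)).mul_const (‖v‖ ^ 2)
    refine (((hf _).hasFDerivAt.comp_hasDerivAt t hline).sub
      ((hasDerivAt_id t).mul_const (fderiv ℝ f x v)) |>.sub hquad).congr_deriv ?_
    simp only [one_mul]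
    ring
  have hφ'_nonpos : ∀ t ∈ interior (Set.Ici (0 : ℝ)),
      fderiv ℝ f (x + t • v) v - fderiv ℝ f x v - L * t * ‖v‖ ^ 2 ≤ 0 := by
    intro t ht
    rw [interior_Ici, Set.mem_Ioi] at ht
    have hlip := hL (x + t • v)
    rw [add_sub_cancel_left, norm_smul, Real.norm_of_nonneg ht.le] at hlip
    rw [sub_nonpos]
    calc fderiv ℝ f (x + t • v) v - fderiv ℝ f x v
        = (fderiv ℝ f (x + t • v) - fderiv ℝ f x) v := rfl
      _ ≤ ‖fderiv ℝ f (x + t • v) - fderiv ℝ f x‖ * ‖v‖ :=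
        (Real.le_norm_self _).trans (ContinuousLinearMap.le_opNorm _ _)
      _ ≤ L * (t * ‖v‖) * ‖v‖ := by gcongr
      _ = L * t * ‖v‖ ^ 2 := by ring
  have hanti : AntitoneOn φ (Set.Ici 0) :=
    antitoneOn_of_hasDerivWithinAt_nonpos (convex_Ici 0)
      (fun t _ ↦ (hφ' t).continuousAt.continuousWithinAt)
      (fun t _ ↦ (hφ' t).hasDerivWithinAt) hφ'_nonpos
  have h01 := hanti Set.self_mem_Ici (Set.mem_Ici.2 zero_le_one) zero_le_one
  simp only [φ, v, one_smul, zero_smul, add_zero, add_sub_cancel] at h01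
  linarith

end Descent

section Gradient

variable {F : Type*} [NormedAddCommGroup F] [InnerProductSpace ℝ F] [CompleteSpace F]

theorem norm_fderiv_sub_fderiv_eq_norm_gradient_sub (f : F → ℝ) (x y : F) :
    ‖fderiv ℝ f x - fderiv ℝ f y‖ = ‖∇ f x - ∇ f y‖ := by
  rw [gradient, gradient, ← LinearIsometryEquiv.map_sub, LinearIsometryEquiv.norm_map]

variable {f : F → ℝ} {L : ℝ} {x : F}

theorem image_le_add_inner_gradient_add_sq_of_norm_gradient_sub_le (hf : Differentiable ℝ f)
    (hL : ∀ z, ‖∇ f z - ∇ f x‖ ≤ L * ‖z - x‖) (y : F) :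
    f y ≤ f x + ⟪∇ f x, y - x⟫ + L / 2 * ‖y - x‖ ^ 2 := by
  rw [inner_gradient_left]
  exact image_le_add_fderiv_add_sq_of_norm_fderiv_sub_le hf
    (fun z ↦ (norm_fderiv_sub_fderiv_eq_norm_gradient_sub f z x).trans_le (hL z)) y

theorem image_sub_inv_smul_sub_le_of_norm_sub_gradient_le (hf : Differentiable ℝ f)
    (hL₀ : 0 < L) (hL : ∀ z, ‖∇ f z - ∇ f x‖ ≤ L * ‖z - x‖) {g : F} {δ : ℝ}
    (hg : ‖g - ∇ f x‖ ≤ δ) :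
    f (x - L⁻¹ • g) - f x ≤ -(1 / (4 * L)) * ‖g‖ ^ 2 + δ ^ 2 / L := by
  have hdescent :=
    image_le_add_inner_gradient_add_sq_of_norm_gradient_sub_le hf hL (x - L⁻¹ • g)
  rw [sub_sub_cancel_left] at hdescent
  have hinner : ⟪g - ∇ f x, g⟫ ≤ δ * ‖g‖ :=
    (real_inner_le_norm _ _).trans (by gcongr)
  calc f (x - L⁻¹ • g) - f x
        ≤ ⟪∇ f x, -(L⁻¹ • g)⟫ + L / 2 * ‖-(L⁻¹ • g)‖ ^ 2 := by linarith
    _ = L⁻¹ * (⟪g - ∇ f x, g⟫ - ‖g‖ ^ 2 / 2) := by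
      rw [inner_neg_right, real_inner_smul_right, norm_neg, norm_smul, inner_sub_left,
        real_inner_self_eq_norm_sq, Real.norm_of_nonneg (inv_nonneg.2 hL₀.le)]
      field_simp
      ring
    _ ≤ L⁻¹ * (δ * ‖g‖ - ‖g‖ ^ 2 / 2) := by gcongr
    _ ≤ L⁻¹ * (δ ^ 2 - ‖g‖ ^ 2 / 4) := by
      gcongr _ * ?_
      nlinarith [sq_nonneg (δ - ‖g‖ / 2)]
    _ = -(1 / (4 * L)) * ‖g‖ ^ 2 + δ ^ 2 / L := by field_simp; ring

end Gradient

theorem stmt_4_general {d : ℕ} (L₁ ε₁ ε₄ : ℝ) (hL₁ : 0 < L₁)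
    (f : EuclideanSpace ℝ (Fin d) → ℝ) (hf : Differentiable ℝ f)
    (hlip : ∀ x y, ‖gradient f x - gradient f y‖ ≤ L₁ * ‖x - y‖)
    (x g : EuclideanSpace ℝ (Fin d))
    (hg : ‖g - gradient f x‖ ≤ ε₄) (hε₄ : ε₄ ≤ ε₁ / (2 * Real.sqrt 2)) :
    f (x - L₁⁻¹ • g) - f x ≤ -(1 / (4 * L₁)) * ‖g‖ ^ 2 + ε₁ ^ 2 / (8 * L₁) := by
  have hε₄_sq : ε₄ ^ 2 ≤ ε₁ ^ 2 / 8 := by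
    have h8 : (2 * Real.sqrt 2) ^ 2 = 8 := by
      rw [mul_pow, Real.sq_sqrt zero_le_two]; norm_num
    calc ε₄ ^ 2 ≤ (ε₁ / (2 * Real.sqrt 2)) ^ 2 :=
        pow_le_pow_left₀ ((norm_nonneg _).trans hg) hε₄ 2
      _ = ε₁ ^ 2 / 8 := by rw [div_pow, h8]
  calc f (x - L₁⁻¹ • g) - f x ≤ -(1 / (4 * L₁)) * ‖g‖ ^ 2 + ε₄ ^ 2 / L₁ :=
        image_sub_inv_smul_sub_le_of_norm_sub_gradient_le hf hL₁ (fun z ↦ hlip z x) hg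
    _ ≤ -(1 / (4 * L₁)) * ‖g‖ ^ 2 + ε₁ ^ 2 / (8 * L₁) := by
      rw [← div_div (ε₁ ^ 2) 8 L₁]; gcongr

theorem stmt_4 {d : ℕ} (L₁ ε₁ ε₄ : ℝ) (hL₁ : 0 < L₁) (hε₁ : 0 < ε₁)
    (f : EuclideanSpace ℝ (Fin d) → ℝ) (hf : Differentiable ℝ f)
    (hlip : ∀ x y, ‖gradient f x - gradient f y‖ ≤ L₁ * ‖x - y‖)
    (x g : EuclideanSpace ℝ (Fin d))
    (hg : ‖g - gradient f x‖ ≤ ε₄) (hε₄ : ε₄ ≤ ε₁ / (2 * Real.sqrt 2)) :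
    f (x - L₁⁻¹ • g) - f x ≤ -(1 / (4 * L₁)) * ‖g‖ ^ 2 + ε₁ ^ 2 / (8 * L₁) :=
  stmt_4_general L₁ ε₁ ε₄ hL₁ f hf hlip x g hg hε₄
end

section
/- If each non-terminal step of SNCG-2 decreases f by at least ε₁²/(8L₁) when it is an SG step and by at least ε₂³/(48L₂²) when it is an NCG-S step, and f(x₀) - inf f ≤ Δ, then the number of SG steps is at most (8L₁/ε₁²)·Δ and the number of NCG-S steps is at most 1 + (48L₂²/ε₂³)·Δ. -/
/-! Every step of index `j < J` lowers `a` by `a j - a (j + 1) ≥ 0`, and these decreases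
telescope to `a 0 - a J ≤ Δ`. A class of steps each of which lowers `a` by at least `δ > 0`
therefore has at most `Δ / δ` members. Only the terminal step `J - 1` may fail to decrease
`a` by the guaranteed amount, which accounts for the extra `1` in the bound on NCG-S steps. -/

open Finset

theorem Finset.sum_sub_succ_le_of_subset_range {G : Type*} [AddCommGroup G] [PartialOrder G]
    [IsOrderedAddMonoid G] {a : ℕ → G} {J : ℕ} (ha : ∀ j < J, a (j + 1) ≤ a j)
    {T : Finset ℕ} (hT : T ⊆ range J) :
    ∑ j ∈ T, (a j - a (j + 1)) ≤ a 0 - a J :=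
  calc ∑ j ∈ T, (a j - a (j + 1))
      ≤ ∑ j ∈ range J, (a j - a (j + 1)) :=
        sum_le_sum_of_subset_of_nonneg hT fun j hj _ =>
          sub_nonneg.2 (ha j (mem_range.1 hj))
    _ = a 0 - a J := sum_range_sub' a J

theorem Finset.card_le_div_of_le_sub_succ {K : Type*} [Field K] [LinearOrder K]
    [IsStrictOrderedRing K] {a : ℕ → K} {J : ℕ} {δ Δ : K} (ha : ∀ j < J, a (j + 1) ≤ a j)
    (hΔ : a 0 - a J ≤ Δ) (hδ : 0 < δ) {T : Finset ℕ} (hT : T ⊆ range J)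
    (hdec : ∀ j ∈ T, δ ≤ a j - a (j + 1)) :
    (#T : K) ≤ Δ / δ := by
  rw [le_div_iff₀ hδ, ← nsmul_eq_mul]
  calc #T • δ ≤ ∑ j ∈ T, (a j - a (j + 1)) := card_nsmul_le_sum T _ δ hdec
    _ ≤ a 0 - a J := sum_sub_succ_le_of_subset_range ha hT
    _ ≤ Δ := hΔ

theorem stmt_17_general (a : ℕ → ℝ) (Δ L₁ L₂ ε₁ ε₂ : ℝ) (J : ℕ)
    (hL₁ : 0 < L₁) (hL₂ : 0 < L₂) (hε₁ : 0 < ε₁) (hε₂ : 0 < ε₂)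
    (SG NC : Finset ℕ)
    (hcover : SG ∪ NC = Finset.range J)
    (hmono : ∀ j < J, a (j + 1) ≤ a j)
    (hSG : ∀ j ∈ SG, a j - a (j + 1) ≥ ε₁ ^ 2 / (8 * L₁))
    (hNC : ∀ j ∈ NC, j ≠ J - 1 → a j - a (j + 1) ≥ ε₂ ^ 3 / (48 * L₂ ^ 2))
    (hΔ : a 0 - a J ≤ Δ) :
    (SG.card : ℝ) ≤ 8 * L₁ / ε₁ ^ 2 * Δ ∧
    (NC.card : ℝ) ≤ 1 + 48 * L₂ ^ 2 / ε₂ ^ 3 * Δ := by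
  have hSG_sub : SG ⊆ range J := hcover ▸ subset_union_left
  have hNC_sub : NC.erase (J - 1) ⊆ range J :=
    (erase_subset _ _).trans (hcover ▸ subset_union_right)
  have hNC_card : (#NC : ℝ) ≤ 1 + #(NC.erase (J - 1)) := by
    have := pred_card_le_card_erase (s := NC) (a := J - 1)
    exact_mod_cast (by omega : #NC ≤ 1 + #(NC.erase (J - 1)))
  constructor
  · calc (#SG : ℝ) ≤ Δ / (ε₁ ^ 2 / (8 * L₁)) :=
          card_le_div_of_le_sub_succ hmono hΔ (by positivity) hSG_sub hSG
      _ = 8 * L₁ / ε₁ ^ 2 * Δ := by rw [div_div_eq_mul_div]; ring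
  · calc (#NC : ℝ) ≤ 1 + #(NC.erase (J - 1)) := hNC_card
      _ ≤ 1 + Δ / (ε₂ ^ 3 / (48 * L₂ ^ 2)) := by
          gcongr
          exact card_le_div_of_le_sub_succ hmono hΔ (by positivity) hNC_sub
            fun j hj => hNC j (mem_of_mem_erase hj) (ne_of_mem_erase hj)
      _ = 1 + 48 * L₂ ^ 2 / ε₂ ^ 3 * Δ := by rw [div_div_eq_mul_div]; ring

theorem stmt_17 (a : ℕ → ℝ) (Δ L₁ L₂ ε₁ ε₂ : ℝ) (J : ℕ)
    (hL₁ : 0 < L₁) (hL₂ : 0 < L₂) (hε₁ : 0 < ε₁) (hε₂ : 0 < ε₂)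
    (SG NC : Finset ℕ) (hdisj : Disjoint SG NC)
    (hcover : SG ∪ NC = Finset.range J)
    (hmono : ∀ j < J, a (j + 1) ≤ a j)
    (hSG : ∀ j ∈ SG, a j - a (j + 1) ≥ ε₁ ^ 2 / (8 * L₁))
    (hNC : ∀ j ∈ NC, j ≠ J - 1 → a j - a (j + 1) ≥ ε₂ ^ 3 / (48 * L₂ ^ 2))
    (hΔ : a 0 - a J ≤ Δ) :
    (SG.card : ℝ) ≤ 8 * L₁ / ε₁ ^ 2 * Δ ∧
    (NC.card : ℝ) ≤ 1 + 48 * L₂ ^ 2 / ε₂ ^ 3 * Δ :=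
  stmt_17_general a Δ L₁ L₂ ε₁ ε₂ J hL₁ hL₂ hε₁ hε₂ SG NC hcover hmono hSG hNC hΔ
end
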